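/- Suppose f : ℝ → L²(O; ℝ²) is locally square-integrable, f∞ ∈ L²(O; ℝ²), for every τ ∈ ℝ the integral ∫_{-∞}^{τ} ‖f(t) − f∞‖²_{L²(O)} dt is finite, and lim_{τ→−∞} ∫_{-∞}^{τ} ‖f(t) − f∞‖²_{L²(O)} dt = 0. Then the tails of f are backward-uniformly small: for every κ > 0 and every τ ∈ ℝ, lim_{k→+∞} sup_{s ≤ τ} ∫_{-∞}^{s} e^{κ(r−s)} ( ∫_{{x ∈ O : |x| ≥ k}} |f(x,r)|² dx ) dr = 0, where f(·,r) denotes (a representative of) the L² function f(r). -/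

import Mathlib

/-!
For `r ≤ s` the weight `e^{κ(r-s)}` is at most `1` and has total mass `1/κ` on `(-∞, s]`.
Split the time integral at a time `T` far in the past. Before `T`, the tail of `f r` is at most
`2‖f r - f∞‖² + 2 · (tail of f∞)`, so that part is bounded by `2 ∫_{-∞}^T ‖f - f∞‖²`, small
by the choice of `T`, plus `2/κ` times the tail of the single `L²` function `f∞`, which
vanishes as `k → ∞`. On `(T, τ]` the tails of `f r` tend to `0` for each `r` and are dominated
by `‖f r‖²`, which is integrable there, so dominated convergence makes that part small
uniformly in `s ≤ τ`.
-/

open MeasureTheory Filter Topology Set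
open scoped ENNReal

theorem lintegral_nnnorm_sq_eq_norm_sq {α E : Type*} [MeasurableSpace α] [NormedAddCommGroup E]
    {μ : Measure α} (g : Lp E 2 μ) :
    ∫⁻ x, (‖g x‖₊ : ℝ≥0∞) ^ 2 ∂μ = ENNReal.ofReal (‖g‖ ^ 2) := by
  have := eLpNorm_nnreal_pow_eq_lintegral (f := (g : α → E)) (μ := μ) (p := 2) two_ne_zero
  simp only [NNReal.coe_ofNat, ENNReal.rpow_ofNat, ENNReal.coe_ofNat] at this
  rw [Lp.norm_def, ENNReal.ofReal_pow ENNReal.toReal_nonneg,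
    ENNReal.ofReal_toReal (Lp.eLpNorm_ne_top g), this]
  simp [enorm_eq_nnnorm]

section Tail

variable {X E : Type*} [NormedAddCommGroup X] [MeasurableSpace X] [NormedAddCommGroup E]

theorem tendsto_setLIntegral_norm_ge_atTop [OpensMeasurableSpace X] (μ : Measure X)
    {F : X → ℝ≥0∞} (hF : ∫⁻ x, F x ∂μ ≠ ∞) :
    Tendsto (fun k : ℝ => ∫⁻ x in {x | k ≤ ‖x‖}, F x ∂μ) atTop (𝓝 0) := by
  have hmeas : ∀ k : ℝ, MeasurableSet {x : X | k ≤ ‖x‖} := fun k =>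
    measurableSet_le measurable_const measurable_norm
  have hanti : Antitone fun k : ℝ => {x : X | k ≤ ‖x‖} := fun a b hab x hx => hab.trans hx
  have hempty : ⋂ k : ℝ, {x : X | k ≤ ‖x‖} = ∅ :=
    eq_empty_of_forall_notMem fun x hx => absurd (mem_iInter.1 hx (‖x‖ + 1)) (by simp)
  have hfin : μ.withDensity F {x | 0 ≤ ‖x‖} ≠ ∞ := by
    rw [withDensity_apply _ (hmeas 0)]
    exact ne_top_of_le_ne_top hF (setLIntegral_le_lintegral _ _)
  have := tendsto_measure_iInter_atTop (fun k => (hmeas k).nullMeasurableSet) hanti ⟨0, hfin⟩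
  rw [hempty, measure_empty] at this
  exact this.congr fun k => withDensity_apply _ (hmeas k)

noncomputable def tailEnergy (μ : Measure X) (k : ℝ) (g : Lp E 2 μ) : ℝ≥0∞ :=
  ∫⁻ x in {x | k ≤ ‖x‖}, (‖g x‖₊ : ℝ≥0∞) ^ 2 ∂μ

variable {μ : Measure X}

theorem tailEnergy_le_norm_sq (k : ℝ) (g : Lp E 2 μ) :
    tailEnergy μ k g ≤ ENNReal.ofReal (‖g‖ ^ 2) :=
  (setLIntegral_le_lintegral _ _).trans_eq (lintegral_nnnorm_sq_eq_norm_sq g)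

theorem tendsto_tailEnergy_atTop [OpensMeasurableSpace X] (g : Lp E 2 μ) :
    Tendsto (fun k => tailEnergy μ k g) atTop (𝓝 0) :=
  tendsto_setLIntegral_norm_ge_atTop μ <| by
    rw [lintegral_nnnorm_sq_eq_norm_sq g]; exact ENNReal.ofReal_ne_top

theorem tailEnergy_le_norm_sub_sq_add (k : ℝ) (a b : Lp E 2 μ) :
    tailEnergy μ k a ≤ 2 * ENNReal.ofReal (‖a - b‖ ^ 2) + 2 * tailEnergy μ k b := by
  have hpt : ∀ᵐ x ∂μ, (‖a x‖₊ : ℝ≥0∞) ^ 2 ≤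
      2 * (‖(a - b : Lp E 2 μ) x‖₊ : ℝ≥0∞) ^ 2 + 2 * (‖b x‖₊ : ℝ≥0∞) ^ 2 := by
    filter_upwards [Lp.coeFn_sub a b] with x hx
    have htri : ‖a x‖₊ ≤ ‖a x - b x‖₊ + ‖b x‖₊ := by
      simpa using nnnorm_add_le (a x - b x) (b x)
    have : ‖a x‖₊ ^ 2 ≤ 2 * ‖a x - b x‖₊ ^ 2 + 2 * ‖b x‖₊ ^ 2 := by
      rw [← mul_add]; exact (pow_le_pow_left₀ zero_le htri 2).trans add_sq_le
    rw [hx, Pi.sub_apply]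
    exact_mod_cast this
  have hmeas : AEMeasurable (fun x => 2 * (‖(a - b : Lp E 2 μ) x‖₊ : ℝ≥0∞) ^ 2) μ :=
    ((Lp.aestronglyMeasurable (a - b)).enorm.pow_const 2).const_mul 2
  calc tailEnergy μ k a
      ≤ ∫⁻ x in {x | k ≤ ‖x‖}, (2 * (‖(a - b : Lp E 2 μ) x‖₊ : ℝ≥0∞) ^ 2
          + 2 * (‖b x‖₊ : ℝ≥0∞) ^ 2) ∂μ := lintegral_mono_ae (ae_restrict_of_ae hpt)
    _ = 2 * ∫⁻ x in {x | k ≤ ‖x‖}, (‖(a - b : Lp E 2 μ) x‖₊ : ℝ≥0∞) ^ 2 ∂μ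
          + 2 * tailEnergy μ k b := by
        rw [lintegral_add_left' hmeas.restrict, lintegral_const_mul' _ _ ENNReal.ofNat_ne_top,
          lintegral_const_mul' _ _ ENNReal.ofNat_ne_top, tailEnergy]
    _ ≤ 2 * ENNReal.ofReal (‖a - b‖ ^ 2) + 2 * tailEnergy μ k b := by
        gcongr
        exact (setLIntegral_le_lintegral _ _).trans_eq (lintegral_nnnorm_sq_eq_norm_sq _)

variable {T : Type*} [MeasurableSpace T] [SFinite μ] {f : T → Lp E 2 μ}

theorem measurable_tailEnergy_comp [MeasurableSpace E] [OpensMeasurableSpace E]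
    (hf : Measurable fun p : T × X => f p.1 p.2) (k : ℝ) :
    Measurable fun t => tailEnergy μ k (f t) :=
  (hf.enorm.pow_const 2).lintegral_prod_right'

theorem tendsto_lintegral_tailEnergy_atTop [OpensMeasurableSpace X] [MeasurableSpace E]
    [OpensMeasurableSpace E]
    (hf : Measurable fun p : T × X => f p.1 p.2) {ν : Measure T}
    (hfin : ∫⁻ t, ENNReal.ofReal (‖f t‖ ^ 2) ∂ν ≠ ∞) :
    Tendsto (fun k => ∫⁻ t, tailEnergy μ k (f t) ∂ν) atTop (𝓝 0) := by
  simpa using tendsto_lintegral_filter_of_dominated_convergence _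
    (Eventually.of_forall (measurable_tailEnergy_comp hf))
    (Eventually.of_forall fun k => ae_of_all _ fun t => tailEnergy_le_norm_sq k (f t)) hfin
    (ae_of_all _ fun t => tendsto_tailEnergy_atTop (f t))

end Tail

section BackwardTails

theorem lintegral_exp_mul_sub_Iic {κ : ℝ} (hκ : 0 < κ) (s : ℝ) :
    ∫⁻ r in Iic s, ENNReal.ofReal (Real.exp (κ * (r - s))) = ENNReal.ofReal κ⁻¹ := by
  have hsplit : ∀ r, Real.exp (κ * (r - s)) = Real.exp (-(κ * s)) * Real.exp (κ * r) := by
    intro r; rw [← Real.exp_add]; ring_nf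
  simp_rw [hsplit]
  rw [← ofReal_integral_eq_lintegral_ofReal ((integrableOn_exp_mul_Iic hκ s).const_mul _)
      (ae_of_all _ fun r => by positivity), integral_const_mul, integral_exp_mul_Iic hκ,
    mul_div_assoc', ← Real.exp_add, neg_add_cancel, Real.exp_zero, one_div]

theorem setLIntegral_exp_mul_sub_le {κ : ℝ} (hκ : 0 < κ) {s τ : ℝ} (hs : s ≤ τ) (T : ℝ)
    {φ d : ℝ → ℝ≥0∞} {c : ℝ≥0∞} (hφ : ∀ r, φ r ≤ d r + c) :
    ∫⁻ r in Iic s, ENNReal.ofReal (Real.exp (κ * (r - s))) * φ r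
      ≤ (∫⁻ r in Iic T, d r) + (∫⁻ r in Ioc T τ, φ r) + ENNReal.ofReal κ⁻¹ * c := by
  set e := fun r => ENNReal.ofReal (Real.exp (κ * (r - s)))
  have he_meas : Measurable e := by fun_prop
  have he_le : ∀ r ∈ Iic s, e r ≤ 1 := fun r hr =>
    ENNReal.ofReal_le_one.2 <| Real.exp_le_one_iff.2 <|
      mul_nonpos_of_nonneg_of_nonpos hκ.le (sub_nonpos.2 hr)
  have hnear :
      ∫⁻ r in Iic s ∩ Iic T, e r * φ r ≤ (∫⁻ r in Iic T, d r) + ENNReal.ofReal κ⁻¹ * c :=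
    calc ∫⁻ r in Iic s ∩ Iic T, e r * φ r
        ≤ ∫⁻ r in Iic s ∩ Iic T, (d r + e r * c) :=
          setLIntegral_mono' (measurableSet_Iic.inter measurableSet_Iic) fun r hr =>
            calc e r * φ r ≤ e r * d r + e r * c := by rw [← mul_add]; gcongr; exact hφ r
              _ ≤ d r + e r * c := by gcongr; exact mul_le_of_le_one_left' (he_le r hr.1)
      _ = (∫⁻ r in Iic s ∩ Iic T, d r) + ∫⁻ r in Iic s ∩ Iic T, e r * c :=
          lintegral_add_right _ (he_meas.mul_const c)
      _ ≤ (∫⁻ r in Iic T, d r) + ∫⁻ r in Iic s, e r * c :=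
          add_le_add (lintegral_mono_set inter_subset_right) (lintegral_mono_set inter_subset_left)
      _ = (∫⁻ r in Iic T, d r) + ENNReal.ofReal κ⁻¹ * c := by
          rw [lintegral_mul_const _ he_meas, lintegral_exp_mul_sub_Iic hκ]
  have hfar : ∫⁻ r in Iic s \ Iic T, e r * φ r ≤ ∫⁻ r in Ioc T τ, φ r :=
    calc ∫⁻ r in Iic s \ Iic T, e r * φ r ≤ ∫⁻ r in Iic s \ Iic T, φ r :=
          setLIntegral_mono' (measurableSet_Iic.diff measurableSet_Iic) fun r hr =>
            mul_le_of_le_one_left' (he_le r hr.1)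
      _ ≤ ∫⁻ r in Ioc T τ, φ r :=
          lintegral_mono_set fun r hr => ⟨not_le.1 hr.2, le_trans hr.1 hs⟩
  rw [← lintegral_inter_add_sdiff _ (Iic s) measurableSet_Iic (B := Iic T), add_right_comm]
  exact add_le_add hnear hfar

theorem tendsto_iSup_setLIntegral_exp_mul_sub {φ : ℝ → ℝ → ℝ≥0∞} {d c : ℝ → ℝ≥0∞}
    (hφ : ∀ k r, φ k r ≤ d r + c k)
    (hd : Tendsto (fun T => ∫⁻ r in Iic T, d r) atBot (𝓝 0))
    (hc : Tendsto c atTop (𝓝 0))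
    (hloc : ∀ a b, Tendsto (fun k => ∫⁻ r in Ioc a b, φ k r) atTop (𝓝 0))
    {κ : ℝ} (hκ : 0 < κ) (τ : ℝ) :
    Tendsto (fun k => ⨆ s ∈ Iic τ,
      ∫⁻ r in Iic s, ENNReal.ofReal (Real.exp (κ * (r - s))) * φ k r) atTop (𝓝 0) := by
  rw [ENNReal.tendsto_nhds_zero]
  intro ε hε
  have hε3 : 0 < ε / 3 := ENNReal.div_pos hε.ne' ENNReal.ofNat_ne_top
  obtain ⟨T, hT⟩ := (ENNReal.tendsto_nhds_zero.1 hd _ hε3).exists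
  have hc' : Tendsto (fun k => ENNReal.ofReal κ⁻¹ * c k) atTop (𝓝 0) := by
    simpa using ENNReal.Tendsto.const_mul hc (Or.inr ENNReal.ofReal_ne_top)
  filter_upwards [ENNReal.tendsto_nhds_zero.1 (hloc T τ) _ hε3,
    ENNReal.tendsto_nhds_zero.1 hc' _ hε3] with k hmid hconst
  refine iSup₂_le fun s hs => ?_
  calc _ ≤ _ := setLIntegral_exp_mul_sub_le hκ hs T (hφ k)
    _ ≤ ε / 3 + ε / 3 + ε / 3 := by gcongr
    _ = ε := ENNReal.add_thirds ε

end BackwardTails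

theorem statement1_general
    (O : Set (EuclideanSpace ℝ (Fin 2)))
    (f : ℝ → Lp (EuclideanSpace ℝ (Fin 2)) 2 (volume.restrict O))
    (f_inf : Lp (EuclideanSpace ℝ (Fin 2)) 2 (volume.restrict O))
    (hmeas : Measurable fun p : ℝ × EuclideanSpace ℝ (Fin 2) => f p.1 p.2)
    (hloc : ∀ a b : ℝ, IntegrableOn (fun t => ‖f t‖ ^ 2) (Set.Icc a b))
    (hconv : Tendsto (fun τ : ℝ => ∫⁻ t in Set.Iic τ, ENNReal.ofReal (‖f t - f_inf‖ ^ 2))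
      atBot (nhds 0)) :
    ∀ κ > (0 : ℝ), ∀ τ : ℝ,
      Tendsto (fun k : ℝ =>
          ⨆ s ∈ Set.Iic τ,
            ∫⁻ r in Set.Iic s,
              ENNReal.ofReal (Real.exp (κ * (r - s))) *
                ∫⁻ x in {x : EuclideanSpace ℝ (Fin 2) | k ≤ ‖x‖},
                  (‖f r x‖₊ : ENNReal) ^ 2 ∂(volume.restrict O))
        atTop (nhds 0) := by
  intro κ hκ τ
  refine tendsto_iSup_setLIntegral_exp_mul_sub
    (φ := fun k r => tailEnergy _ k (f r))
    (d := fun r => 2 * ENNReal.ofReal (‖f r - f_inf‖ ^ 2))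
    (c := fun k => 2 * tailEnergy _ k f_inf)
    (fun k r => tailEnergy_le_norm_sub_sq_add k (f r) f_inf)
    ?_ ?_ (fun a b => ?_) hκ τ
  · simpa [lintegral_const_mul'] using
      ENNReal.Tendsto.const_mul hconv (Or.inr ENNReal.ofNat_ne_top)
  · simpa using
      ENNReal.Tendsto.const_mul (tendsto_tailEnergy_atTop f_inf) (Or.inr ENNReal.ofNat_ne_top)
  · exact tendsto_lintegral_tailEnergy_atTop hmeas <| ne_top_of_le_ne_top
      (hloc a b).lintegral_lt_top.ne (lintegral_mono_set Ioc_subset_Icc_self)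

/-- If `f : ℝ → L²(O; ℝ²)` is locally square-integrable and converges
backward to `f∞ ∈ L²(O; ℝ²)` in the sense that `∫_{-∞}^{τ} ‖f(t) − f∞‖² dt` is finite for
every `τ` and tends to `0` as `τ → −∞`, then the tails of `f` are backward-uniformly small:
for every `κ > 0` and `τ ∈ ℝ`,
`lim_{k→∞} sup_{s ≤ τ} ∫_{-∞}^{s} e^{κ(r−s)} ∫_{{x ∈ O : |x| ≥ k}} |f(x,r)|² dx dr = 0`. -/
theorem statement1
    (O : Set (EuclideanSpace ℝ (Fin 2))) (hO : IsOpen O)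
    (f : ℝ → Lp (EuclideanSpace ℝ (Fin 2)) 2 (volume.restrict O))
    (f_inf : Lp (EuclideanSpace ℝ (Fin 2)) 2 (volume.restrict O))
    (hmeas : Measurable fun p : ℝ × EuclideanSpace ℝ (Fin 2) => f p.1 p.2)
    (hmeas' : Measurable fun t => ‖f t - f_inf‖)
    (hloc : ∀ a b : ℝ, IntegrableOn (fun t => ‖f t‖ ^ 2) (Set.Icc a b))
    (hfin : ∀ τ : ℝ, ∫⁻ t in Set.Iic τ, ENNReal.ofReal (‖f t - f_inf‖ ^ 2) < ⊤)
    (hconv : Tendsto (fun τ : ℝ => ∫⁻ t in Set.Iic τ, ENNReal.ofReal (‖f t - f_inf‖ ^ 2))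
      atBot (nhds 0)) :
    ∀ κ > (0 : ℝ), ∀ τ : ℝ,
      Tendsto (fun k : ℝ =>
          ⨆ s ∈ Set.Iic τ,
            ∫⁻ r in Set.Iic s,
              ENNReal.ofReal (Real.exp (κ * (r - s))) *
                ∫⁻ x in {x : EuclideanSpace ℝ (Fin 2) | k ≤ ‖x‖},
                  (‖f r x‖₊ : ENNReal) ^ 2 ∂(volume.restrict O))
        atTop (nhds 0) :=
  statement1_general O f f_inf hmeas hloc hconv
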